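/- arXiv:2006.09678 — 8 statements merged into one kernel-verified Lean document; each statement's English description precedes it below -/
import Mathlib

section
/- Let θ, φ : [0,2π] → ℝ be continuous. Then ∫₀^{2π} exp(i(θ(t) + λ·φ(t))) dt = 0 for all real λ if and only if ∫₀^{2π} exp(iθ(t)) · φ(t)ⁿ dt = 0 for all natural numbers n ≥ 0. -/
/-!
Expanding `exp (i λ φ)` and integrating termwise (legitimate because `φ` is bounded on the
compact interval) shows that `λ ↦ ∫ exp (i (θ + λ φ))` is the sum of the everywhere convergent
power series `∑ (i λ)ⁿ / n! · ∫ exp (i θ) φⁿ`. A power series in a real variable vanishes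
identically exactly when all of its coefficients vanish.
-/

open MeasureTheory

theorem hasSum_integral_mul_cexp_mul {X : Type*} [MeasurableSpace X] {μ : Measure X}
    {f g : X → ℂ} (hf : Integrable f μ) (hg : AEStronglyMeasurable g μ) {M : ℝ}
    (hM : ∀ᵐ x ∂μ, ‖g x‖ ≤ M) (z : ℂ) :
    HasSum (fun n => z ^ n / n.factorial * ∫ x, f x * g x ^ n ∂μ)
      (∫ x, f x * Complex.exp (z * g x) ∂μ) := by
  set F : ℕ → X → ℂ := fun n x => f x * ((z * g x) ^ n / n.factorial)
  have hF_bound : ∀ n, ∀ᵐ x ∂μ,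
      ‖(z * g x) ^ n / (n.factorial : ℂ)‖ ≤ (‖z‖ * M) ^ n / n.factorial := fun n => by
    filter_upwards [hM] with x hx
    rw [norm_div, norm_pow, norm_mul, Complex.norm_natCast]
    gcongr
  have hF_int : ∀ n, Integrable (F n) μ := fun n => hf.mul_bdd (by fun_prop) (hF_bound n)
  have hF_sum : Summable fun n => ∫ x, ‖F n x‖ ∂μ := by
    refine .of_nonneg_of_le (fun n => integral_nonneg fun x => norm_nonneg _) (fun n => ?_)
      ((Real.summable_pow_div_factorial (‖z‖ * M)).mul_left (∫ x, ‖f x‖ ∂μ))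
    rw [← integral_mul_const]
    refine integral_mono_ae (hF_int n).norm (hf.norm.mul_const _) ?_
    filter_upwards [hF_bound n] with x hx
    rw [norm_mul]
    exact mul_le_mul_of_nonneg_left hx (norm_nonneg _)
  have h_tsum : ∀ x, ∑' n, F n x = f x * Complex.exp (z * g x) := fun x => by
    rw [tsum_mul_left, Complex.exp_eq_exp_ℂ, NormedSpace.exp_eq_tsum_div]
  have h_int : ∀ n, ∫ x, F n x ∂μ = z ^ n / n.factorial * ∫ x, f x * g x ^ n ∂μ := fun n => by
    rw [← integral_const_mul]
    congr 1 with x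
    ring
  simpa only [h_tsum, h_int] using hasSum_integral_of_summable_integral_norm hF_int hF_sum

theorem eq_zero_of_forall_hasSum_pow_smul_eq_zero {𝕜 E : Type*} [NontriviallyNormedField 𝕜]
    [NormedAddCommGroup E] [NormedSpace 𝕜 E] {c : ℕ → E}
    (h : ∀ x : 𝕜, HasSum (fun n => x ^ n • c n) 0) : c = 0 := by
  obtain ⟨x, hx⟩ := NormedField.exists_one_lt_norm 𝕜
  let p : FormalMultilinearSeries 𝕜 𝕜 E :=
    fun n => ContinuousMultilinearMap.mkPiRing 𝕜 (Fin n) (c n)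
  have hrad : (‖x‖₊ : ENNReal) ≤ p.radius := by
    refine p.le_radius_of_tendsto (l := 0) ?_
    simpa [p, norm_smul, mul_comm] using (h x).summable.tendsto_atTop_zero.norm
  have hp : HasFPowerSeriesOnBall 0 p 0 1 :=
    ⟨le_trans (by exact_mod_cast hx.le) hrad, one_pos, fun {y} _ => by simpa [p] using h y⟩
  have hp_zero : p = 0 := HasFPowerSeriesAt.eq_zero ⟨1, hp⟩
  funext n
  simpa [p] using congr($hp_zero n fun _ => 1)

open Complex in
theorem hasSum_intervalIntegral_cexp_I_mul {θ φ : ℝ → ℝ} {a b : ℝ} (hab : a ≤ b)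
    (hθ : ContinuousOn θ (Set.Icc a b)) (hφ : ContinuousOn φ (Set.Icc a b)) (l : ℝ) :
    HasSum (fun n => l ^ n • (I ^ n / n.factorial * ∫ t in a..b, exp (I * θ t) * (φ t : ℂ) ^ n))
      (∫ t in a..b, exp (I * (θ t + l * φ t))) := by
  obtain ⟨M, hM⟩ := isCompact_Icc.exists_bound_of_continuousOn hφ
  have hf : IntegrableOn (fun t => exp (I * θ t)) (Set.Ioc a b) :=
    (ContinuousOn.integrableOn_Icc (by fun_prop)).mono_set Set.Ioc_subset_Icc_self
  have hg : AEStronglyMeasurable (fun t => (φ t : ℂ)) (volume.restrict (Set.Ioc a b)) :=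
    ((continuous_ofReal.comp_continuousOn hφ).mono Set.Ioc_subset_Icc_self).aestronglyMeasurable
      measurableSet_Ioc
  have hg_bound : ∀ᵐ t ∂(volume.restrict (Set.Ioc a b)), ‖(φ t : ℂ)‖ ≤ M :=
    ae_restrict_of_forall_mem measurableSet_Ioc fun t ht => by
      simpa using hM t (Set.Ioc_subset_Icc_self ht)
  rw [intervalIntegral.integral_of_le hab]
  convert hasSum_integral_mul_cexp_mul hf hg hg_bound (I * l) using 1
  · ext n
    rw [intervalIntegral.integral_of_le hab, real_smul, ofReal_pow]
    ring
  · congr 1 with t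
    rw [← exp_add]
    ring_nf

open Real

theorem stmt_1 (θ φ : ℝ → ℝ)
    (hθ : ContinuousOn θ (Set.Icc 0 (2 * π)))
    (hφ : ContinuousOn φ (Set.Icc 0 (2 * π))) :
    (∀ l : ℝ, ∫ t in (0:ℝ)..(2 * π),
        Complex.exp (Complex.I * ((θ t : ℂ) + (l : ℂ) * (φ t : ℂ))) = 0) ↔
    (∀ n : ℕ, ∫ t in (0:ℝ)..(2 * π),
        Complex.exp (Complex.I * (θ t : ℂ)) * (φ t : ℂ) ^ n = 0) := by
  have key := hasSum_intervalIntegral_cexp_I_mul (by positivity) hθ hφ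
  constructor
  · intro h n
    have h_coeff := congrFun (eq_zero_of_forall_hasSum_pow_smul_eq_zero fun l => h l ▸ key l) n
    exact (mul_eq_zero.mp h_coeff).resolve_left (by simp [Nat.factorial_ne_zero])
  · intro h l
    exact (key l).unique (by simp [h])
end

section
/- Let θ, φ : [0,2π] → ℝ with θ, φ continuously differentiable. If ∫₀^{2π} exp(iθ(t)) · φ(t)ⁿ dt = 0 for all n ∈ ℕ, then for every bounded integrable function g : ℝ → ℝ and every n ∈ ℕ we have ∫₀^{2π} exp(iθ(t)) · g(φ(t))ⁿ dt = 0. -/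
/-!
Since `w = exp (i θ)` is bounded, `u ↦ ∫ w u` is continuous for the L¹ norm, so the functions `f`
with `∫ w · f ∘ φ = 0` are closed under L¹ limits of `f ∘ φ`. The hypothesis puts every polynomial
there; Weierstrass approximation on an interval containing the range of `φ` adds every continuous
`f`, and density of continuous functions in L¹ of the pushforward measure `φ_* μ` adds every
bounded measurable `f`, in particular `gⁿ`.
-/

open MeasureTheory Filter Topology Polynomial

section

variable {α : Type*} [MeasurableSpace α] {μ : Measure α} {w : α → ℂ} {C : ℝ}

theorem norm_integral_mul_sub_integral_mul_le (hw : AEStronglyMeasurable w μ)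
    (hwC : ∀ᵐ x ∂μ, ‖w x‖ ≤ C) {u v : α → ℝ} (hu : Integrable u μ) (hv : Integrable v μ) :
    ‖∫ x, w x * u x ∂μ - ∫ x, w x * v x ∂μ‖ ≤ C * ∫ x, |u x - v x| ∂μ := by
  have hint : ∀ {f : α → ℝ}, Integrable f μ → Integrable (fun x => w x * f x) μ :=
    fun hf => hf.ofReal.bdd_mul hw hwC
  rw [← integral_sub (hint hu) (hint hv), ← integral_const_mul]
  refine norm_integral_le_of_norm_le ((hu.sub hv).abs.const_mul C) ?_
  filter_upwards [hwC] with x hx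
  rw [← mul_sub, norm_mul, ← Complex.ofReal_sub, Complex.norm_real, Real.norm_eq_abs]
  exact mul_le_mul_of_nonneg_right hx (abs_nonneg _)

theorem integral_mul_eq_zero_of_forall_approx (hw : AEStronglyMeasurable w μ)
    (hwC : ∀ᵐ x ∂μ, ‖w x‖ ≤ C) {u : α → ℝ} (hu : Integrable u μ)
    (happrox : ∀ ε > 0, ∃ v : α → ℝ, Integrable v μ ∧ ∫ x, w x * v x ∂μ = 0 ∧
      ∫ x, |u x - v x| ∂μ ≤ ε) :
    ∫ x, w x * u x ∂μ = 0 := by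
  have hbound : ∀ ε > 0, ‖∫ x, w x * u x ∂μ‖ ≤ max C 0 * ε := by
    intro ε hε
    obtain ⟨v, hv, hv0, huv⟩ := happrox ε hε
    have hwC' : ∀ᵐ x ∂μ, ‖w x‖ ≤ max C 0 := hwC.mono fun x hx => hx.trans (le_max_left _ _)
    simpa [hv0] using (norm_integral_mul_sub_integral_mul_le hw hwC' hu hv).trans
      (mul_le_mul_of_nonneg_left huv (le_max_right _ _))
  have hlim : Tendsto (fun ε => max C 0 * ε) (𝓝[>] (0 : ℝ)) (𝓝 0) := by
    simpa using ((continuous_const_mul (max C 0)).tendsto 0).mono_left nhdsWithin_le_nhds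
  exact norm_le_zero_iff.mp <| ge_of_tendsto hlim <|
    eventually_nhdsWithin_of_forall fun ε hε => hbound ε hε

variable [IsFiniteMeasure μ] {φ : α → ℝ} {a b : ℝ}

theorem integrable_comp_of_ae_mem_Icc (hφ : AEMeasurable φ μ)
    (hφab : ∀ᵐ x ∂μ, φ x ∈ Set.Icc a b)
    {f : ℝ → ℝ} (hf : Continuous f) : Integrable (fun x => f (φ x)) μ := by
  obtain ⟨M, hM⟩ := isCompact_Icc.exists_bound_of_continuousOn hf.continuousOn
  exact .of_bound (hf.comp_aestronglyMeasurable hφ.aestronglyMeasurable) M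
    (hφab.mono fun x hx => hM _ hx)

theorem integral_mul_polynomial_eval_comp_eq_zero (hw : AEStronglyMeasurable w μ)
    (hwC : ∀ᵐ x ∂μ, ‖w x‖ ≤ C) (hφ : AEMeasurable φ μ) (hφab : ∀ᵐ x ∂μ, φ x ∈ Set.Icc a b)
    (hmom : ∀ n : ℕ, ∫ x, w x * (φ x : ℂ) ^ n ∂μ = 0) (p : ℝ[X]) :
    ∫ x, w x * ((p.eval (φ x) : ℝ) : ℂ) ∂μ = 0 := by
  have hint (n : ℕ) : Integrable (fun x => w x * (φ x : ℂ) ^ n) μ := by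
    simpa using (integrable_comp_of_ae_mem_Icc hφ hφab (continuous_pow n)).ofReal.bdd_mul hw hwC
  simp_rw [eval_eq_sum_range, Complex.ofReal_sum, Complex.ofReal_mul, Complex.ofReal_pow,
    Finset.mul_sum, mul_left_comm (w _)]
  rw [integral_finsetSum _ fun i _ => (hint i).const_mul _]
  exact Finset.sum_eq_zero fun i _ => by rw [integral_const_mul, hmom, mul_zero]

theorem integral_mul_comp_eq_zero_of_continuous (hw : AEStronglyMeasurable w μ)
    (hwC : ∀ᵐ x ∂μ, ‖w x‖ ≤ C) (hφ : AEMeasurable φ μ) (hφab : ∀ᵐ x ∂μ, φ x ∈ Set.Icc a b)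
    (hmom : ∀ n : ℕ, ∫ x, w x * (φ x : ℂ) ^ n ∂μ = 0) {f : ℝ → ℝ} (hf : Continuous f) :
    ∫ x, w x * (f (φ x) : ℂ) ∂μ = 0 := by
  refine integral_mul_eq_zero_of_forall_approx hw hwC
    (integrable_comp_of_ae_mem_Icc hφ hφab hf) fun ε hε => ?_
  set δ := ε / (μ.real Set.univ + 1)
  obtain ⟨p, hp⟩ := exists_polynomial_near_of_continuousOn a b f hf.continuousOn δ (by positivity)
  refine ⟨fun x => p.eval (φ x), integrable_comp_of_ae_mem_Icc hφ hφab p.continuous,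
    integral_mul_polynomial_eval_comp_eq_zero hw hwC hφ hφab hmom p, ?_⟩
  have hfp : ∀ᵐ x ∂μ, ‖|f (φ x) - p.eval (φ x)|‖ ≤ δ := hφab.mono fun x hx => by
    rw [norm_abs_eq_norm, Real.norm_eq_abs, abs_sub_comm]
    exact (hp _ hx).le
  calc ∫ x, |f (φ x) - p.eval (φ x)| ∂μ ≤ δ * μ.real Set.univ :=
        (le_abs_self _).trans (norm_integral_le_of_norm_le_const hfp)
    _ ≤ ε := by
        rw [div_mul_eq_mul_div, div_le_iff₀ (by positivity)]
        nlinarith [measureReal_nonneg (μ := μ) (s := Set.univ)]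

theorem integral_mul_comp_eq_zero_of_bounded (hw : AEStronglyMeasurable w μ)
    (hwC : ∀ᵐ x ∂μ, ‖w x‖ ≤ C) (hφ : AEMeasurable φ μ) (hφab : ∀ᵐ x ∂μ, φ x ∈ Set.Icc a b)
    (hmom : ∀ n : ℕ, ∫ x, w x * (φ x : ℂ) ^ n ∂μ = 0) {f : ℝ → ℝ} (hf : Measurable f)
    {M : ℝ} (hfM : ∀ y, |f y| ≤ M) :
    ∫ x, w x * (f (φ x) : ℂ) ∂μ = 0 := by
  refine integral_mul_eq_zero_of_forall_approx hw hwC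
    (.of_bound (hf.comp_aemeasurable hφ).aestronglyMeasurable M (ae_of_all _ fun x => hfM _))
    fun ε hε => ?_
  have hfν : Integrable f (μ.map φ) := .of_bound hf.aestronglyMeasurable M (ae_of_all _ hfM)
  obtain ⟨c, -, hfc, hc, -⟩ := hfν.exists_hasCompactSupport_integral_sub_le hε
  refine ⟨fun x => c (φ x), integrable_comp_of_ae_mem_Icc hφ hφab hc,
    integral_mul_comp_eq_zero_of_continuous hw hwC hφ hφab hmom hc, ?_⟩
  rwa [integral_map (f := fun y => ‖f y - c y‖) hφ
    (hf.sub hc.measurable).norm.aestronglyMeasurable] at hfc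

end

open Real MeasureTheory intervalIntegral

theorem stmt_3 (θ φ : ℝ → ℝ)
    (hθ : ContDiffOn ℝ 1 θ (Set.Icc 0 (2 * π)))
    (hφ : ContDiffOn ℝ 1 φ (Set.Icc 0 (2 * π)))
    (h : ∀ n : ℕ, ∫ t in (0:ℝ)..(2 * π),
        Complex.exp (Complex.I * (θ t : ℂ)) * (φ t : ℂ) ^ n = 0)
    (g : ℝ → ℝ) (hgb : Bornology.IsBounded (Set.range g)) (hgm : Measurable g) :
    ∀ n : ℕ, ∫ t in (0:ℝ)..(2 * π),
        Complex.exp (Complex.I * (θ t : ℂ)) * (g (φ t) : ℂ) ^ n = 0 := by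
  intro n
  have h2π : (0 : ℝ) ≤ 2 * π := by positivity
  simp only [integral_of_le h2π] at h ⊢
  have hw : AEStronglyMeasurable (fun t => Complex.exp (Complex.I * θ t))
      (volume.restrict (Set.Ioc 0 (2 * π))) :=
    (Complex.continuous_exp.comp_continuousOn (continuousOn_const.mul
      (Complex.continuous_ofReal.comp_continuousOn hθ.continuousOn))).mono
      Set.Ioc_subset_Icc_self |>.aestronglyMeasurable measurableSet_Ioc
  have hφm : AEMeasurable φ (volume.restrict (Set.Ioc 0 (2 * π))) :=
    (hφ.continuousOn.mono Set.Ioc_subset_Icc_self).aemeasurable measurableSet_Ioc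
  have hφrange :=
    (isCompact_Icc.image_of_continuousOn hφ.continuousOn).isBounded.subset_Icc_sInf_sSup
  obtain ⟨M, hM⟩ := hgb.exists_norm_le
  have hgn : ∀ y, |g y ^ n| ≤ M ^ n := fun y => by
    rw [abs_pow]
    exact pow_le_pow_left₀ (abs_nonneg _) (hM _ ⟨y, rfl⟩) n
  simpa using integral_mul_comp_eq_zero_of_bounded hw
    (ae_of_all _ fun t => (Complex.norm_exp_I_mul_ofReal (θ t)).le) hφm
    ((ae_restrict_mem measurableSet_Ioc).mono fun t ht =>
      hφrange ⟨t, Set.Ioc_subset_Icc_self ht, rfl⟩) h (hgm.pow_const n) hgn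
end

section
/- Let f : [0,2π] → ℝ be continuous with f not identically zero, and let Λ = {λ ∈ ℝ : the curve with curvature λf is closed}, i.e. Λ = {λ : ∫₀^{2π} exp(iλ·φ(t)) dt = 0} where φ(t) = ∫₀^t f(s) ds. Then Λ has no accumulation point in ℝ. -/
/-!
The map `z ↦ ∫₀^{2π} exp(i z φ(t)) dt` is entire (differentiate under the integral sign, with
`φ` bounded on the compact interval) and takes the value `2π` at `z = 0`, so by the identity
theorem its zeros, in particular the real ones forming `Λ`, cannot accumulate anywhere.
-/

open Real MeasureTheory intervalIntegral Filter Topology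

theorem differentiable_integral_cexp_mul {g : ℝ → ℂ} {a b : ℝ}
    (hg : ContinuousOn g (Set.uIcc a b)) :
    Differentiable ℂ fun z : ℂ => ∫ t in a..b, Complex.exp (z * g t) := by
  obtain ⟨C, hC⟩ := isCompact_uIcc.exists_bound_of_continuousOn hg
  have hC0 : 0 ≤ C := (norm_nonneg _).trans (hC a Set.left_mem_uIcc)
  have hcont (z : ℂ) : ContinuousOn (fun t => Complex.exp (z * g t)) (Set.uIcc a b) :=
    (continuousOn_const.mul hg).cexp
  intro z₀
  have h_bound : ∀ᵐ t ∂volume, t ∈ Set.uIoc a b → ∀ z ∈ Metric.ball z₀ 1,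
      ‖g t * Complex.exp (z * g t)‖ ≤ C * Real.exp ((‖z₀‖ + 1) * C) := by
    refine Eventually.of_forall fun t ht z hz => ?_
    have hgt : ‖g t‖ ≤ C := hC t (Set.uIoc_subset_uIcc ht)
    have hz : ‖z‖ ≤ ‖z₀‖ + 1 := by
      have := norm_le_insert' z z₀
      linarith [mem_ball_iff_norm.1 hz]
    have hre : (z * g t).re ≤ (‖z₀‖ + 1) * C :=
      calc (z * g t).re ≤ ‖z * g t‖ := Complex.re_le_norm _
        _ = ‖z‖ * ‖g t‖ := norm_mul _ _
        _ ≤ (‖z₀‖ + 1) * C := mul_le_mul hz hgt (norm_nonneg _) (by positivity)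
    rw [norm_mul, Complex.norm_exp]
    exact mul_le_mul hgt (Real.exp_le_exp.2 hre) (Real.exp_pos _).le hC0
  have h_diff : ∀ᵐ t ∂volume, t ∈ Set.uIoc a b → ∀ z ∈ Metric.ball z₀ 1,
      HasDerivAt (fun z => Complex.exp (z * g t)) (g t * Complex.exp (z * g t)) z := by
    refine Eventually.of_forall fun t _ z _ => ?_
    simpa [mul_comm] using ((hasDerivAt_id z).mul_const (g t)).cexp
  have hF'_meas : AEStronglyMeasurable (fun t => g t * Complex.exp (z₀ * g t))
      (volume.restrict (Set.uIoc a b)) :=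
    ((hg.mul (hcont z₀)).mono Set.uIoc_subset_uIcc).aestronglyMeasurable measurableSet_uIoc
  exact (hasDerivAt_integral_of_dominated_loc_of_deriv_le (Metric.ball_mem_nhds z₀ one_pos)
    (Eventually.of_forall fun z =>
      ((hcont z).mono Set.uIoc_subset_uIcc).aestronglyMeasurable measurableSet_uIoc)
    (hcont z₀).intervalIntegrable hF'_meas h_bound intervalIntegrable_const
    h_diff).2.differentiableAt

theorem Differentiable.not_accPt_real_zeros {F : ℂ → ℂ} (hF : Differentiable ℂ F) {w : ℂ}
    (hw : F w ≠ 0) (x : ℝ) : ¬ AccPt x (𝓟 {y : ℝ | F y = 0}) := by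
  intro hx
  have hreal : ∃ᶠ y : ℝ in 𝓝[≠] x, F y = 0 := by
    rw [frequently_nhdsWithin_iff]
    exact (accPt_iff_frequently.1 hx).mono fun y hy => ⟨hy.2, hy.1⟩
  have hofReal : Tendsto ((↑) : ℝ → ℂ) (𝓝[≠] x) (𝓝[≠] (x : ℂ)) :=
    Complex.continuous_ofReal.continuousWithinAt.tendsto_nhdsWithin fun y hy => by
      simpa [Complex.ofReal_inj] using hy
  have hzero := (hF.differentiableOn.analyticOnNhd isOpen_univ)
    |>.eqOn_zero_of_preconnected_of_frequently_eq_zero isPreconnected_univ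
      (Set.mem_univ (x : ℂ)) (hofReal.frequently hreal)
  exact hw (hzero (Set.mem_univ w))

theorem stmt_6_general (f : ℝ → ℝ)
    (hf : ContinuousOn f (Set.Icc 0 (2 * π)))
    (φ : ℝ → ℝ) (hφ : ∀ t, φ t = ∫ s in (0:ℝ)..t, f s)
    (Λ : Set ℝ)
    (hΛ : Λ = {l : ℝ | ∫ t in (0:ℝ)..(2 * π),
      Complex.exp (Complex.I * (l : ℂ) * (φ t : ℂ)) = 0}) :
    ∀ x : ℝ, ¬ AccPt x (𝓟 Λ) := by
  have hIcc : Set.uIcc 0 (2 * π) = Set.Icc 0 (2 * π) := Set.uIcc_of_le (by positivity)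
  have hφc : ContinuousOn φ (Set.uIcc 0 (2 * π)) := by
    rw [funext hφ]
    exact continuousOn_primitive_interval (hIcc ▸ hf.integrableOn_compact isCompact_Icc)
  set F : ℂ → ℂ := fun z => ∫ t in (0:ℝ)..(2 * π), Complex.exp (z * (Complex.I * φ t))
  have hF : Differentiable ℂ F := differentiable_integral_cexp_mul
    (continuousOn_const.mul (Complex.continuous_ofReal.comp_continuousOn hφc))
  have hF0 : F 0 ≠ 0 := by simp [F, Real.pi_ne_zero]
  have hΛF : Λ = {l : ℝ | F l = 0} := by
    ext l
    simp only [hΛ, F, Set.mem_ofPred_eq, mul_left_comm (l : ℂ), mul_assoc]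
  rw [hΛF]
  exact hF.not_accPt_real_zeros hF0

theorem stmt_6 (f : ℝ → ℝ)
    (hf : ContinuousOn f (Set.Icc 0 (2 * π)))
    (hne : ∃ t ∈ Set.Icc 0 (2 * π), f t ≠ 0)
    (φ : ℝ → ℝ) (hφ : ∀ t, φ t = ∫ s in (0:ℝ)..t, f s)
    (Λ : Set ℝ)
    (hΛ : Λ = {l : ℝ | ∫ t in (0:ℝ)..(2 * π),
      Complex.exp (Complex.I * (l : ℂ) * (φ t : ℂ)) = 0}) :
    ∀ x : ℝ, ¬ AccPt x (𝓟 Λ) :=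
  stmt_6_general f hf φ hφ Λ hΛ
end

section
/- Let θ, φ : [0,2π] → ℝ with ∫₀^{2π} exp(iθ(t)) φ(t)ⁿ dt = 0 for all n ∈ ℕ₀. Then for every real interval [a, a+δ] (δ ≥ 0), ∫_{φ^{-1}([a,a+δ])} exp(iθ(t)) dt = 0, where the integral is over {t ∈ [0,2π] : a ≤ φ(t) ≤ a+δ}. -/
/-!
If all moments `∫ φⁿ • f` of a vector-valued density `f` against a bounded function `φ` vanish,
then by linearity so does `∫ p(φ) • f` for every polynomial `p`, by Weierstrass approximation on
the range of `φ` so does `∫ g(φ) • f` for every continuous `g`, and by dominated convergence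
along thickened indicators of a closed set `F` so does `∫_{φ⁻¹ F} f`.
Apply this with `f = exp(iθ)` on `[0, 2π]` and `F = [a, a + δ]`.
-/

open Real MeasureTheory intervalIntegral

open Filter Topology

namespace MeasureTheory

variable {α E : Type*} [MeasurableSpace α] {μ : Measure α}
  [NormedAddCommGroup E] [NormedSpace ℝ E] {f : α → E} {φ : α → ℝ} {m M : ℝ}

theorem integrable_comp_smul (hf : Integrable f μ) (hφ : AEMeasurable φ μ)
    (hφ_mem : ∀ᵐ x ∂μ, φ x ∈ Set.Icc m M) {g : ℝ → ℝ} (hg : Continuous g) :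
    Integrable (fun x => g (φ x) • f x) μ := by
  obtain ⟨C, hC⟩ := isCompact_Icc.exists_bound_of_continuousOn hg.continuousOn
  exact hf.bdd_smul C (hg.measurable.comp_aemeasurable hφ).aestronglyMeasurable
    (hφ_mem.mono fun x hx => hC _ hx)

theorem integral_polynomial_eval_smul_eq_zero (hf : Integrable f μ) (hφ : AEMeasurable φ μ)
    (hφ_mem : ∀ᵐ x ∂μ, φ x ∈ Set.Icc m M) (h : ∀ n : ℕ, ∫ x, φ x ^ n • f x ∂μ = 0)
    (p : Polynomial ℝ) : ∫ x, p.eval (φ x) • f x ∂μ = 0 := by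
  simp_rw [Polynomial.eval_eq_sum_range, Finset.sum_smul, mul_smul]
  rw [integral_finsetSum _ fun i _ => by
    exact (integrable_comp_smul hf hφ hφ_mem (continuous_pow i)).smul (p.coeff i)]
  exact Finset.sum_eq_zero fun i _ => by rw [integral_smul, h i, smul_zero]

theorem integral_comp_smul_eq_zero (hf : Integrable f μ) (hφ : AEMeasurable φ μ)
    (hφ_mem : ∀ᵐ x ∂μ, φ x ∈ Set.Icc m M) (h : ∀ n : ℕ, ∫ x, φ x ^ n • f x ∂μ = 0)
    {g : ℝ → ℝ} (hg : Continuous g) : ∫ x, g (φ x) • f x ∂μ = 0 := by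
  set N := ∫ x, ‖f x‖ ∂μ
  have hN : 0 ≤ N := integral_nonneg fun x => norm_nonneg _
  refine norm_le_zero_iff.mp (le_of_forall_pos_le_add fun ε hε => ?_)
  obtain ⟨p, hp⟩ := exists_polynomial_near_of_continuousOn m M g hg.continuousOn
    (ε / (N + 1)) (by positivity)
  have hbound : ∀ᵐ x ∂μ, ‖(g (φ x) - p.eval (φ x)) • f x‖ ≤ ε / (N + 1) * ‖f x‖ := by
    filter_upwards [hφ_mem] with x hx
    rw [norm_smul, Real.norm_eq_abs, abs_sub_comm]
    exact mul_le_mul_of_nonneg_right (hp _ hx).le (norm_nonneg _)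
  calc ‖∫ x, g (φ x) • f x ∂μ‖ = ‖∫ x, (g (φ x) - p.eval (φ x)) • f x ∂μ‖ := by
        simp_rw [sub_smul]
        rw [integral_sub (integrable_comp_smul hf hφ hφ_mem hg)
          (integrable_comp_smul hf hφ hφ_mem p.continuous),
          integral_polynomial_eval_smul_eq_zero hf hφ hφ_mem h, sub_zero]
    _ ≤ ∫ x, ε / (N + 1) * ‖f x‖ ∂μ := norm_integral_le_of_norm_le (hf.norm.const_mul _) hbound
    _ = ε / (N + 1) * N := integral_const_mul _ _
    _ ≤ 0 + ε := by
        rw [zero_add, div_mul_eq_mul_div, div_le_iff₀ (by positivity)]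
        nlinarith

theorem setIntegral_preimage_eq_zero_of_isClosed (hf : Integrable f μ) (hφ : AEMeasurable φ μ)
    (hφ_mem : ∀ᵐ x ∂μ, φ x ∈ Set.Icc m M) (h : ∀ n : ℕ, ∫ x, φ x ^ n • f x ∂μ = 0)
    {F : Set ℝ} (hF : IsClosed F) : ∫ x in φ ⁻¹' F, f x ∂μ = 0 := by
  have hr : ∀ n : ℕ, 0 < 1 / ((n : ℝ) + 1) := fun n => Nat.one_div_pos_of_nat
  set g : ℕ → ℝ → ℝ := fun n y => thickenedIndicator (hr n) F y
  have hg : ∀ n, Continuous (g n) := fun n =>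
    NNReal.continuous_coe.comp (thickenedIndicator (hr n) F).continuous
  have hg_le : ∀ n y, ‖g n y‖ ≤ 1 := fun n y => by
    simpa [g] using thickenedIndicator_le_one (hr n) F y
  have hg_lim : ∀ y, Tendsto (fun n => g n y) atTop (𝓝 (F.indicator (fun _ => 1) y)) := by
    have := thickenedIndicator_tendsto_indicator_closure hr
      tendsto_one_div_add_atTop_nhds_zero_nat F
    rw [hF.closure_eq, tendsto_pi_nhds] at this
    intro y
    simpa [g, NNReal.coe_indicator] using NNReal.tendsto_coe.mpr (this y)
  rw [← integral_indicator₀ (hφ.nullMeasurableSet_preimage hF.measurableSet)]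
  refine tendsto_nhds_unique (tendsto_integral_of_dominated_convergence (‖f ·‖)
    (fun n => (integrable_comp_smul hf hφ hφ_mem (hg n)).aestronglyMeasurable) hf.norm
    (fun n => ae_of_all _ fun x => ?_) (ae_of_all _ fun x => ?_)) ?_
  · rw [norm_smul]
    exact mul_le_of_le_one_left (norm_nonneg _) (hg_le n _)
  · convert (hg_lim (φ x)).smul_const (f x) using 2
    by_cases hx : φ x ∈ F <;> simp [hx]
  · simp_rw [integral_comp_smul_eq_zero hf hφ hφ_mem h (hg _)]
    exact tendsto_const_nhds

end MeasureTheory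

theorem stmt_7_general (θ φ : ℝ → ℝ)
    (hθ : ContDiffOn ℝ 1 θ (Set.Icc 0 (2 * π)))
    (hφ : ContDiffOn ℝ 1 φ (Set.Icc 0 (2 * π)))
    (h : ∀ n : ℕ, ∫ t in (0:ℝ)..(2 * π),
        Complex.exp (Complex.I * (θ t : ℂ)) * (φ t : ℂ) ^ n = 0)
    (a δ : ℝ) :
    ∫ t in {t ∈ Set.Icc 0 (2 * π) | a ≤ φ t ∧ φ t ≤ a + δ},
      Complex.exp (Complex.I * (θ t : ℂ)) = 0 := by
  have hφc : ContinuousOn φ (Set.Icc 0 (2 * π)) := hφ.continuousOn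
  obtain ⟨C, hC⟩ := isCompact_Icc.exists_bound_of_continuousOn hφc
  have hset : {t ∈ Set.Icc 0 (2 * π) | a ≤ φ t ∧ φ t ≤ a + δ}
      = φ ⁻¹' Set.Icc a (a + δ) ∩ Set.Icc 0 (2 * π) := by
    ext t; simp [and_comm]
  rw [hset, ← Measure.restrict_restrict' measurableSet_Icc]
  refine setIntegral_preimage_eq_zero_of_isClosed (m := -C) (M := C) ?_
    (hφc.aemeasurable measurableSet_Icc) ?_ (fun n => ?_) isClosed_Icc
  · exact ((by fun_prop : Continuous fun x : ℝ => Complex.exp (Complex.I * x)).comp_continuousOn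
      hθ.continuousOn).integrableOn_compact isCompact_Icc
  · exact (ae_restrict_mem measurableSet_Icc).mono fun t ht => abs_le.mp (hC t ht)
  · rw [integral_Icc_eq_integral_Ioc, ← intervalIntegral.integral_of_le (by positivity)]
    simpa [Complex.real_smul, mul_comm] using h n

theorem stmt_7 (θ φ : ℝ → ℝ)
    (hθ : ContDiffOn ℝ 1 θ (Set.Icc 0 (2 * π)))
    (hφ : ContDiffOn ℝ 1 φ (Set.Icc 0 (2 * π)))
    (h : ∀ n : ℕ, ∫ t in (0:ℝ)..(2 * π),
        Complex.exp (Complex.I * (θ t : ℂ)) * (φ t : ℂ) ^ n = 0)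
    (a δ : ℝ) (hδ : 0 ≤ δ) :
    ∫ t in {t ∈ Set.Icc 0 (2 * π) | a ≤ φ t ∧ φ t ≤ a + δ},
      Complex.exp (Complex.I * (θ t : ℂ)) = 0 :=
  stmt_7_general θ φ hθ hφ h a δ
end

section
/- Let N ≥ 3 and let θ₂, …, θ_{N-1} ∈ ℝ and φ₂, …, φ_{N-1} ∈ ℝ. Then Σ_{j=2}^{N-1} exp(i(θⱼ + λφⱼ)) = -1 for all λ ∈ ℝ if and only if Σ_{j=2}^{N-1} exp(iθⱼ) = -1 and Σ_{j=2}^{N-1} exp(iθⱼ)·φⱼⁿ = 0 for all n ≥ 1. -/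
/-!
With `c j = exp (i θ j)` and `a j = i φ j`, the polyline sum is the exponential sum
`f λ = ∑ c j * exp (a j * λ)`, whose `n`-th derivative is `∑ c j * a j ^ n * exp (a j * λ)`.
If `f` is constant, all these derivatives vanish, in particular at `λ = 0`; conversely, the
Taylor series `f λ = ∑ (λ ^ n / n!) * ∑ c j * a j ^ n` collapses to its constant term once the
moments `∑ c j * a j ^ n`, `n ≥ 1`, vanish.
-/

open Complex Finset

section ExpSum

variable {ι : Type*} (s : Finset ι) (c a : ι → ℂ)

noncomputable def expSum (t : ℝ) : ℂ := ∑ j ∈ s, c j * cexp (a j * t)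

@[simp]
theorem expSum_zero : expSum s c a 0 = ∑ j ∈ s, c j := by
  simp [expSum]

theorem hasDerivAt_expSum (t : ℝ) :
    HasDerivAt (expSum s c a) (expSum s (fun j => c j * a j) a t) t := by
  refine HasDerivAt.fun_sum fun j _ => ?_
  have h := (((hasDerivAt_id (t : ℂ)).const_mul (a j)).cexp.comp_ofReal).const_mul (c j)
  simp only [id, mul_one] at h
  exact h.congr_deriv (by ring)

theorem hasSum_expSum (t : ℝ) :
    HasSum (fun n : ℕ => (t : ℂ) ^ n / n.factorial * ∑ j ∈ s, c j * a j ^ n)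
      (expSum s c a t) := by
  have h := hasSum_sum (s := s) fun j _ =>
    (NormedSpace.expSeries_div_hasSum_exp (a j * t)).mul_left (c j)
  simp only [← exp_eq_exp_ℂ] at h
  refine h.congr_fun fun n => ?_
  rw [mul_sum]
  refine sum_congr rfl fun j _ => ?_
  ring

theorem expSum_mul_eq_zero_of_forall_eq (h : ∀ t, expSum s c a t = expSum s c a 0) (t : ℝ) :
    expSum s (fun j => c j * a j) a t = 0 := by
  have hconst : expSum s c a = fun _ => expSum s c a 0 := funext h
  exact (hasDerivAt_expSum s c a t).unique (hconst ▸ hasDerivAt_const t _)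

theorem forall_expSum_eq_iff :
    (∀ t, expSum s c a t = expSum s c a 0) ↔
      ∀ n, 1 ≤ n → ∑ j ∈ s, c j * a j ^ n = 0 := by
  constructor
  · intro h n hn
    have hconst : ∀ m t, expSum s (fun j => c j * a j ^ m) a t =
        expSum s (fun j => c j * a j ^ m) a 0 := by
      intro m
      induction m with
      | zero => simpa using h
      | succ m ih =>
        intro t
        have h0 := expSum_mul_eq_zero_of_forall_eq s _ a ih
        simp only [mul_assoc, ← pow_succ] at h0
        rw [h0, h0]
    obtain ⟨m, rfl⟩ := Nat.exists_eq_add_of_le' hn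
    simpa [mul_assoc, ← pow_succ] using expSum_mul_eq_zero_of_forall_eq s _ a (hconst m) 0
  · intro h t
    have hsingle := hasSum_single (f := fun n : ℕ => (t : ℂ) ^ n / n.factorial *
      ∑ j ∈ s, c j * a j ^ n) 0 fun n hn => by rw [h n (Nat.one_le_iff_ne_zero.2 hn), mul_zero]
    rw [(hasSum_expSum s c a t).unique hsingle]
    simp

end ExpSum

theorem forall_sum_cexp_eq_iff {ι : Type*} (s : Finset ι) (θ φ : ι → ℝ) (w : ℂ) :
    (∀ l : ℝ, ∑ j ∈ s, cexp (I * (θ j + l * φ j)) = w) ↔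
      (∑ j ∈ s, cexp (I * θ j) = w ∧
        ∀ n, 1 ≤ n → ∑ j ∈ s, cexp (I * θ j) * φ j ^ n = 0) := by
  have hsum (l : ℝ) : ∑ j ∈ s, cexp (I * (θ j + l * φ j)) =
      expSum s (fun j => cexp (I * θ j)) (fun j => I * φ j) l :=
    sum_congr rfl fun j _ => by rw [← exp_add]; ring_nf
  have hmoment (n : ℕ) : ∑ j ∈ s, cexp (I * θ j) * (I * φ j) ^ n = 0 ↔
      ∑ j ∈ s, cexp (I * θ j) * φ j ^ n = 0 := by
    have h : ∑ j ∈ s, cexp (I * θ j) * (I * φ j) ^ n =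
        I ^ n * ∑ j ∈ s, cexp (I * θ j) * φ j ^ n := by
      rw [mul_sum]
      exact sum_congr rfl fun j _ => by ring
    rw [h, mul_eq_zero, or_iff_right (pow_ne_zero n I_ne_zero)]
  have hconst := forall_expSum_eq_iff s (fun j => cexp (I * θ j)) (fun j => I * φ j)
  simp only [expSum_zero, hmoment] at hconst
  simp only [hsum, ← hconst]
  constructor
  · intro h
    exact ⟨by simpa using h 0, fun t => by rw [h t, ← h 0, expSum_zero]⟩
  · rintro ⟨h0, h⟩ l
    rw [h l, h0]

theorem stmt_8_general (N : ℕ) (θ φ : ℕ → ℝ) :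
    (∀ l : ℝ, ∑ j ∈ Finset.Icc 2 (N - 1),
        Complex.exp (Complex.I * ((θ j : ℂ) + (l : ℂ) * (φ j : ℂ))) = -1) ↔
    ((∑ j ∈ Finset.Icc 2 (N - 1), Complex.exp (Complex.I * (θ j : ℂ)) = -1) ∧
      ∀ n : ℕ, 1 ≤ n →
        ∑ j ∈ Finset.Icc 2 (N - 1),
          Complex.exp (Complex.I * (θ j : ℂ)) * (φ j : ℂ) ^ n = 0) :=
  forall_sum_cexp_eq_iff _ θ φ (-1)

theorem stmt_8 (N : ℕ) (hN : 3 ≤ N) (θ φ : ℕ → ℝ) :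
    (∀ l : ℝ, ∑ j ∈ Finset.Icc 2 (N - 1),
        Complex.exp (Complex.I * ((θ j : ℂ) + (l : ℂ) * (φ j : ℂ))) = -1) ↔
    ((∑ j ∈ Finset.Icc 2 (N - 1), Complex.exp (Complex.I * (θ j : ℂ)) = -1) ∧
      ∀ n : ℕ, 1 ≤ n →
        ∑ j ∈ Finset.Icc 2 (N - 1),
          Complex.exp (Complex.I * (θ j : ℂ)) * (φ j : ℂ) ^ n = 0) :=
  stmt_8_general N θ φ
end

section
/- Let J be a finite index set, θ : J → ℝ, φ : J → ℝ. The following are equivalent: (1) Σ_{j∈J} exp(i(θⱼ + λφⱼ)) = Σ_{j∈J} exp(iθⱼ) for all λ ∈ ℝ; (2) Σ_{j∈J} exp(iθⱼ)·φⱼⁿ = 0 for all n ≥ 1; (3) for every a ≠ 0, Σ_{j∈J, φⱼ=a} exp(iθⱼ) = 0. -/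
/-!
Write `c j = exp (i θⱼ)` and `F(λ) = ∑ⱼ exp (i λ φⱼ) c j`. The `n`-th derivative of `F` at `0` is
`iⁿ ∑ⱼ φⱼⁿ c j`, so a constant `F` has vanishing moments. Conversely, grouping the sum by the value of `φ`,
the moments are `∑ₐ aⁿ Cₐ` with `Cₐ` the fibre sums; pairing with a Lagrange basis polynomial that vanishes
at `0` and at every other value of `φ` isolates a single `Cₐ`, `a ≠ 0`. Finally, if every fibre sum over
a nonzero value vanishes, only the fibre `φ = 0`, on which the deformation is trivial, contributes to `F`.
-/

open Complex Finset Polynomial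

section Fibres

variable {J : Type*} [Fintype J]

theorem sum_smul_eq_smul_sum_of_fiber_sum_eq_zero {α R M : Type*} [DecidableEq α] [Ring R]
    [AddCommGroup M] [Module R M] (φ : J → α) (c : J → M) (w : α → R) (a₀ : α)
    (h : ∀ a ≠ a₀, ∑ j ∈ univ.filter (fun j => φ j = a), c j = 0) :
    ∑ j, w (φ j) • c j = w a₀ • ∑ j, c j := by
  rw [← sub_eq_zero, smul_sum, ← sum_sub_distrib]
  simp_rw [← sub_smul]
  rw [← sum_fiberwise_of_maps_to fun j _ => mem_image_of_mem φ (mem_univ j)]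
  refine sum_eq_zero fun a _ => ?_
  have hfib : ∀ j ∈ univ.filter (fun j => φ j = a), (w (φ j) - w a₀) • c j = (w a - w a₀) • c j :=
    fun j hj => by rw [(mem_filter.mp hj).2]
  rw [sum_congr rfl hfib, ← smul_sum]
  rcases eq_or_ne a a₀ with rfl | ha
  · rw [sub_self, zero_smul]
  · rw [h a ha, smul_zero]

theorem sum_eval_smul_eq_zero_of_moments {K M : Type*} [Semiring K] [AddCommMonoid M] [Module K M]
    (ψ : J → K) (c : J → M) (h : ∀ n, 1 ≤ n → ∑ j, ψ j ^ n • c j = 0) {p : K[X]}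
    (hp : p.eval 0 = 0) :
    ∑ j, p.eval (ψ j) • c j = 0 := by
  simp_rw [eval_eq_sum_range, sum_smul, mul_smul]
  rw [sum_comm]
  refine sum_eq_zero fun i _ => ?_
  rw [← smul_sum]
  rcases Nat.eq_zero_or_pos i with rfl | hi
  · rw [coeff_zero_eq_eval_zero, hp, zero_smul]
  · rw [h i hi, smul_zero]

theorem sum_fiber_eq_zero_of_moments {K M : Type*} [Field K] [DecidableEq K] [AddCommMonoid M]
    [Module K M] (ψ : J → K) (c : J → M) (h : ∀ n, 1 ≤ n → ∑ j, ψ j ^ n • c j = 0) {a : K}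
    (ha : a ≠ 0) :
    ∑ j ∈ univ.filter (fun j => ψ j = a), c j = 0 := by
  set s := insert 0 (insert a (univ.image ψ))
  set p := Lagrange.basis s id a
  have hpa : p.eval a = 1 := Lagrange.eval_basis_self (v := id) (Set.injOn_id _) (by simp [s])
  have hpb : ∀ b ∈ s, b ≠ a → p.eval b = 0 :=
    fun b hb hba => Lagrange.eval_basis_of_ne (v := id) hba.symm hb
  have hfib : ∑ j, p.eval (ψ j) • c j = ∑ j ∈ univ.filter (fun j => ψ j = a), c j := by
    rw [← sum_filter_of_ne fun j _ hj => by_contra fun hja => hj <| by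
      rw [hpb (ψ j) (by simp [s]) hja, zero_smul]]
    exact sum_congr rfl fun j hj => by rw [(mem_filter.mp hj).2, hpa, one_smul]
  rw [← hfib]
  exact sum_eval_smul_eq_zero_of_moments ψ c h (hpb 0 (by simp [s]) ha.symm)

end Fibres

section Moments

variable {J E : Type*} [Fintype J] [NormedAddCommGroup E] [NormedSpace ℂ E] (a : J → ℂ) (c : J → E)

theorem hasDerivAt_sum_exp_smul (x : ℝ) :
    HasDerivAt (fun l : ℝ => ∑ j, exp (l * a j) • c j) (∑ j, exp (x * a j) • (a j • c j)) x := by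
  refine HasDerivAt.fun_sum fun j _ => ?_
  simpa [smul_smul, mul_comm] using
    (((hasDerivAt_id x).ofReal_comp.mul_const (a j)).cexp).smul_const (c j)

theorem sum_exp_smul_smul_eq_zero_of_const (h : ∀ l : ℝ, ∑ j, exp (l * a j) • c j = ∑ j, c j)
    (x : ℝ) :
    ∑ j, exp (x * a j) • (a j • c j) = 0 := by
  have hconst : (fun l : ℝ => ∑ j, exp (l * a j) • c j) = fun _ => ∑ j, c j := funext h
  exact (hasDerivAt_sum_exp_smul a c x).unique (hconst ▸ hasDerivAt_const x _)

theorem sum_pow_smul_eq_zero_of_const (h : ∀ l : ℝ, ∑ j, exp (l * a j) • c j = ∑ j, c j)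
    (n : ℕ) (hn : 1 ≤ n) :
    ∑ j, a j ^ n • c j = 0 := by
  suffices ∀ x : ℝ, ∑ j, exp (x * a j) • (a j ^ n • c j) = 0 by simpa using this 0
  induction n, hn using Nat.le_induction with
  | base => simpa using sum_exp_smul_smul_eq_zero_of_const a c h
  | succ n _ ih =>
    have hconst : ∀ l : ℝ, ∑ j, exp (l * a j) • (a j ^ n • c j) = ∑ j, a j ^ n • c j :=
      fun l => by simpa using (ih l).trans (ih 0).symm
    simpa [pow_succ', smul_smul] using sum_exp_smul_smul_eq_zero_of_const a _ hconst

end Moments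

theorem stmt_11 {J : Type*} [Fintype J] (θ φ : J → ℝ) :
    List.TFAE [
      (∀ l : ℝ, ∑ j : J, Complex.exp (Complex.I * ((θ j : ℂ) + (l : ℂ) * (φ j : ℂ)))
          = ∑ j : J, Complex.exp (Complex.I * (θ j : ℂ))),
      (∀ n : ℕ, 1 ≤ n →
        ∑ j : J, Complex.exp (Complex.I * (θ j : ℂ)) * (φ j : ℂ) ^ n = 0),
      (∀ a : ℝ, a ≠ 0 →
        ∑ j ∈ Finset.univ.filter (fun j => φ j = a),
          Complex.exp (Complex.I * (θ j : ℂ)) = 0)] := by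
  have hexp : ∀ (l : ℝ) j, exp (I * (θ j + l * φ j)) = exp (l * (I * φ j)) • exp (I * θ j) := by
    intro l j
    rw [smul_eq_mul, ← exp_add]
    ring_nf
  tfae_have 1 → 2 := by
    intro h1 n hn
    have hmom := sum_pow_smul_eq_zero_of_const (fun j => I * φ j) (fun j => exp (I * θ j))
      (fun l => by simpa only [hexp] using h1 l) n hn
    simp_rw [smul_eq_mul, mul_pow, mul_assoc, ← mul_sum, mul_comm ((φ _ : ℂ) ^ n)] at hmom
    exact (mul_eq_zero.mp hmom).resolve_left (pow_ne_zero n I_ne_zero)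
  tfae_have 2 → 3 := fun h2 a ha => sum_fiber_eq_zero_of_moments φ _
    (fun n hn => by simpa [real_smul, mul_comm] using h2 n hn) ha
  tfae_have 3 → 1 := fun h3 l => by
    simpa [hexp] using sum_smul_eq_smul_sum_of_fiber_sum_eq_zero φ (fun j => exp (I * θ j))
      (fun x : ℝ => exp (l * (I * x))) 0 h3
  tfae_finish
end

section
/- Let n ≥ 1, and consider in ℂ the multiset of 2n+1 unit vectors consisting of n copies each of u and v, where u, v are unit vectors with u + v = (1/n, 0) (i.e. u = 1/(2n) + i·√(1 - 1/(4n²)) and v its conjugate), together with the vector w = -1. The total sum is 0, but no nonempty proper sub-multiset of these 2n+1 vectors has sum 0. -/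
/-!
A sub-multiset consists of `a` copies of `u`, `b` copies of `v = conj u` and `c ≤ 1` copies of
`w = -1`. Its sum has imaginary part `(a - b) Im u`, which vanishes only for `a = b`; then its
real part is `a / n - c`, which vanishes only for `(a, c) = (0, 0)` or `(n, 1)`, that is, for the
empty multiset or the whole one.
-/

open ComplexConjugate

theorem Multiset.exists_eq_add_of_le_add {α : Type*} [DecidableEq α] {m s t : Multiset α}
    (h : m ≤ s + t) : ∃ s' ≤ s, ∃ t' ≤ t, m = s' + t' :=
  ⟨m ∩ s, inter_le_right, m - s, tsub_le_iff_left.2 h, by rw [add_comm, sub_add_inter]⟩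

theorem Multiset.exists_eq_replicate_add_replicate_add_replicate_of_le {α : Type*}
    {m : Multiset α} {x y z : α} {k l p : ℕ}
    (h : m ≤ replicate k x + replicate l y + replicate p z) :
    ∃ a ≤ k, ∃ b ≤ l, ∃ c ≤ p, m = replicate a x + replicate b y + replicate c z := by
  classical
  obtain ⟨mxy, hxy, mz, hz, rfl⟩ := exists_eq_add_of_le_add h
  obtain ⟨mx, hx, my, hy, rfl⟩ := exists_eq_add_of_le_add hxy
  obtain ⟨a, ha, rfl⟩ := le_replicate_iff.1 hx
  obtain ⟨b, hb, rfl⟩ := le_replicate_iff.1 hy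
  obtain ⟨c, hc, rfl⟩ := le_replicate_iff.1 hz
  exact ⟨a, ha, b, hb, c, hc, rfl⟩

theorem Complex.natCast_mul_add_natCast_mul_conj_eq_natCast_iff {u : ℂ} {n a b c : ℕ}
    (hre : 2 * n * u.re = 1) (him : u.im ≠ 0) :
    a * u + b * conj u = c ↔ a = b ∧ a = c * n := by
  constructor
  · intro h
    have hab : a = b := by
      have := congrArg im h
      simp only [add_im, mul_im, natCast_re, natCast_im, conj_im, conj_re] at this
      exact_mod_cast mul_right_cancel₀ him (by linarith : (a : ℝ) * u.im = b * u.im)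
    subst hab
    refine ⟨rfl, ?_⟩
    have := congrArg re h
    simp only [add_re, mul_re, natCast_re, natCast_im, conj_im, conj_re] at this
    exact_mod_cast (by linear_combination (n : ℝ) * this - a * hre : (a : ℝ) = c * n)
  · rintro ⟨rfl, rfl⟩
    rw [← mul_add, add_conj]
    have hre' : 2 * (n : ℂ) * u.re = 1 := mod_cast hre
    push_cast
    linear_combination (c : ℂ) * hre'

open Real

theorem stmt_15 (n : ℕ) (hn : 1 ≤ n)
    (u v w : ℂ)
    (hu : u = (1 / (2 * n) : ℝ) + Complex.I * (Real.sqrt (1 - 1 / (4 * n ^ 2)) : ℝ))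
    (hv : v = (starRingEnd ℂ) u)
    (hw : w = -1)
    (S : Multiset ℂ)
    (hS : S = Multiset.replicate n u + Multiset.replicate n v + {w}) :
    S.sum = 0 ∧
      ∀ T : Multiset ℂ, T ≤ S → T ≠ 0 → T ≠ S → T.sum ≠ 0 := by
  have hn' : (1 : ℝ) ≤ n := mod_cast hn
  have hre : 2 * n * u.re = 1 := by
    have hu_re : u.re = 1 / (2 * n) := by simp [hu]
    rw [hu_re]
    field_simp
  have him : u.im ≠ 0 := by
    have hu_im : u.im = √(1 - 1 / (4 * n ^ 2)) := by simp [hu]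
    have hlt : 1 / (4 * (n : ℝ) ^ 2) < 1 := by
      rw [div_lt_one (by positivity)]
      nlinarith
    rw [hu_im, Real.sqrt_ne_zero']
    linarith
  have hsum (a b c : ℕ) :
      (Multiset.replicate a u + Multiset.replicate b v + Multiset.replicate c w).sum = 0 ↔
        a = b ∧ a = c * n := by
    simp only [hv, hw, Multiset.sum_add, Multiset.sum_replicate, nsmul_eq_mul, smul_neg, mul_one,
      ← sub_eq_add_neg, sub_eq_zero]
    exact Complex.natCast_mul_add_natCast_mul_conj_eq_natCast_iff hre him
  rw [← Multiset.replicate_one] at hS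
  subst hS
  refine ⟨(hsum n n 1).2 ⟨rfl, (one_mul n).symm⟩, ?_⟩
  intro T hT hT0 hTS hTsum
  obtain ⟨a, -, b, -, c, hc, rfl⟩ :=
    Multiset.exists_eq_replicate_add_replicate_add_replicate_of_le hT
  obtain ⟨rfl, rfl⟩ := (hsum a b c).1 hTsum
  interval_cases c
  · exact hT0 (by simp)
  · exact hTS (by simp)
end

section
/- Let θ, φ : [0,2π] → ℝ with φ continuously differentiable, and suppose ∫_{φ^{-1}([a, a+δ])} exp(iθ(t)) dt = 0 for all δ ≥ 0 and a fixed regular value a of φ with a ∉ {φ(0), φ(2π)}, where φ^{-1}(a) = {b₁, …, b_m} is finite and φ'(bⱼ) ≠ 0 for each j. Then Σ_{j=1}^m exp(iθ(bⱼ)) / |φ'(bⱼ)| = 0. -/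
/-!
Near a point `b` of the level set `φ = a` with `φ'(b) = d ≠ 0`, `φ` is strictly monotone, so
`{a ≤ φ ≤ a + δ}` meets a small ball around `b` in the interval between `b` and `ψ (a + δ)`,
where `ψ` is the local inverse of `φ`. Since `ψ' (a) = 1 / d`, the fundamental theorem of calculus
makes the integral of `f` over that interval `δ f(b) / |d| + o(δ)`. By compactness, for small `δ`
the whole set `{a ≤ φ ≤ a + δ}` lies in the union of disjoint such balls around the finitely many
`bⱼ`, hence `δ⁻¹ ∫_{a ≤ φ ≤ a + δ} f → ∑ⱼ f(bⱼ) / |φ'(bⱼ)|`, and the hypothesis makes the left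
side vanish.
-/

open Real MeasureTheory Filter Set Metric
open scoped Topology

theorem HasStrictDerivAt.exists_mem_nhds_strictMonoOn {φ : ℝ → ℝ} {d x : ℝ}
    (hφ : HasStrictDerivAt φ d x) (hd : 0 < d) : ∃ U ∈ 𝓝 x, StrictMonoOn φ U := by
  obtain ⟨U, hU, happrox⟩ :=
    hφ.hasStrictFDerivAt.approximates_deriv_on_nhds (c := ⟨d / 2, by positivity⟩)
      (Or.inr (half_pos hd))
  refine ⟨U, hU, fun s hs t ht hst => ?_⟩
  have h : |φ t - φ s - (t - s) * d| ≤ d / 2 * |t - s| := happrox t ht s hs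
  rw [abs_of_pos (sub_pos.2 hst)] at h
  nlinarith [neg_abs_le (φ t - φ s - (t - s) * d)]

theorem HasStrictDerivAt.exists_mem_nhds_strictAntiOn {φ : ℝ → ℝ} {d x : ℝ}
    (hφ : HasStrictDerivAt φ d x) (hd : d < 0) : ∃ U ∈ 𝓝 x, StrictAntiOn φ U := by
  obtain ⟨U, hU, hmono⟩ := hφ.neg.exists_mem_nhds_strictMonoOn (neg_pos.2 hd)
  exact ⟨U, hU, fun s hs t ht hst => neg_lt_neg_iff.1 (hmono hs ht hst)⟩

theorem HasStrictDerivAt.exists_rightInverse_add {φ : ℝ → ℝ} {d x : ℝ}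
    (hφ : HasStrictDerivAt φ d x) (hd : d ≠ 0) :
    ∃ c : ℝ → ℝ, c 0 = x ∧ HasDerivAt c d⁻¹ 0 ∧ ∀ᶠ δ in 𝓝 0, φ (c δ) = φ x + δ := by
  have hshift : HasDerivAt (fun δ : ℝ => φ x + δ) 1 0 := (hasDerivAt_id 0).const_add _
  have hshift' : Tendsto (fun δ : ℝ => φ x + δ) (𝓝 0) (𝓝 (φ x)) := by
    simpa using hshift.continuousAt.tendsto
  refine ⟨fun δ => hφ.localInverse φ d x hd (φ x + δ), ?_, ?_,
    hshift'.eventually (hφ.eventually_right_inverse hd)⟩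
  · simp
  · have h := (hφ.to_localInverse hd).hasDerivAt.comp_of_eq 0 hshift (by simp)
    rwa [mul_one] at h

theorem StrictMonoOn.inter_preimage_Icc {φ : ℝ → ℝ} {J : Set ℝ} (hφ : StrictMonoOn φ J)
    (hJ : J.OrdConnected) {x y : ℝ} (hx : x ∈ J) (hy : y ∈ J) :
    J ∩ φ ⁻¹' Icc (φ x) (φ y) = Icc x y := by
  ext t
  refine ⟨fun ⟨ht, h1, h2⟩ => ⟨(hφ.le_iff_le hx ht).1 h1, (hφ.le_iff_le ht hy).1 h2⟩,
    fun ht => ⟨hJ.out hx hy ht, ?_, ?_⟩⟩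
  · exact (hφ.le_iff_le hx (hJ.out hx hy ht)).2 ht.1
  · exact (hφ.le_iff_le (hJ.out hx hy ht) hy).2 ht.2

theorem StrictAntiOn.inter_preimage_Icc {φ : ℝ → ℝ} {J : Set ℝ} (hφ : StrictAntiOn φ J)
    (hJ : J.OrdConnected) {x y : ℝ} (hx : x ∈ J) (hy : y ∈ J) :
    J ∩ φ ⁻¹' Icc (φ y) (φ x) = Icc x y := by
  ext t
  refine ⟨fun ⟨ht, h1, h2⟩ => ⟨(hφ.le_iff_ge ht hx).1 h2, (hφ.le_iff_ge hy ht).1 h1⟩,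
    fun ht => ⟨hJ.out hx hy ht, ?_, ?_⟩⟩
  · exact (hφ.le_iff_ge hy (hJ.out hx hy ht)).2 ht.2
  · exact (hφ.le_iff_ge (hJ.out hx hy ht) hx).2 ht.1

theorem IsCompact.eventually_inter_preimage_Icc_subset {X : Type*} [TopologicalSpace X]
    {K U : Set X} {φ : X → ℝ} {a : ℝ} (hK : IsCompact K) (hφ : ContinuousOn φ K) (hU : IsOpen U)
    (haU : K ∩ φ ⁻¹' {a} ⊆ U) : ∀ᶠ δ in 𝓝 0, K ∩ φ ⁻¹' Icc a (a + δ) ⊆ U := by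
  have ha : a ∉ φ '' (K \ U) := fun ⟨t, ⟨htK, htU⟩, hta⟩ => htU (haU ⟨htK, hta⟩)
  obtain ⟨ρ, hρ, hball⟩ := Metric.mem_nhds_iff.1
    (((hK.diff hU).image_of_continuousOn (hφ.mono sdiff_subset)).isClosed.isOpen_compl.mem_nhds ha)
  filter_upwards [ball_mem_nhds 0 hρ] with δ hδ t ⟨htK, hta, htaδ⟩
  by_contra htU
  refine hball ?_ ⟨t, ⟨htK, htU⟩, rfl⟩
  rw [mem_ball, Real.dist_eq, sub_zero] at hδ
  rw [mem_ball, Real.dist_eq, abs_sub_lt_iff]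
  constructor <;> linarith [le_abs_self δ]

theorem eventually_pairwise_disjoint_ball {α ι : Type*} [MetricSpace α] [Finite ι] {b : ι → α}
    (hb : Function.Injective b) :
    ∀ᶠ r in 𝓝[>] 0, Pairwise (Function.onFun Disjoint fun i => ball (b i) r) := by
  refine eventually_all.2 fun i => eventually_all.2 fun j => ?_
  by_cases hij : i = j
  · exact Eventually.of_forall fun _ h => absurd hij h
  · filter_upwards [Ioo_mem_nhdsGT (half_pos (dist_pos.2 (hb.ne hij)))] with r hr _
    exact ball_disjoint_ball (by linarith [hr.2])

section

variable {E : Type*} [NormedAddCommGroup E] [NormedSpace ℝ E]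

theorem setIntegral_eq_sum_setIntegral_inter {α ι : Type*} [MeasurableSpace α] [Fintype ι]
    {μ : Measure α} {f : α → E} {S : Set α} {U : ι → Set α} (hSU : S ⊆ ⋃ i, U i)
    (hS : MeasurableSet S) (hU : ∀ i, MeasurableSet (U i))
    (hdisj : Pairwise (Function.onFun Disjoint U)) (hf : IntegrableOn f S μ) :
    ∫ x in S, f x ∂μ = ∑ i, ∫ x in S ∩ U i, f x ∂μ := by
  conv_lhs => rw [← inter_eq_left.2 hSU, inter_iUnion]
  exact integral_iUnion_fintype (fun i => hS.inter (hU i))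
    (fun i j hij => (hdisj hij).mono inter_subset_right inter_subset_right)
    (fun i => hf.mono_set inter_subset_left)

variable [CompleteSpace E]

theorem tendsto_inv_smul_intervalIntegral_comp {c : ℝ → ℝ} {c' : ℝ} {f : ℝ → E}
    (hc : HasDerivAt c c' 0) (hf : ContinuousAt f (c 0))
    (hfm : StronglyMeasurableAtFilter f (𝓝 (c 0))) :
    Tendsto (fun δ => δ⁻¹ • ∫ t in c 0..c δ, f t) (𝓝[>] 0) (𝓝 (c' • f (c 0))) := by
  simpa using ((intervalIntegral.integral_hasDerivAt_right IntervalIntegrable.refl hfm hf).scomp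
    0 hc).tendsto_slope_zero_right

theorem tendsto_inv_smul_setIntegral_inter_preimage_Icc_of_strictMonoOn {φ : ℝ → ℝ} {d x : ℝ}
    {J : Set ℝ} {f : ℝ → E} (hφ : HasStrictDerivAt φ d x) (hd : d ≠ 0) (hJ : J ∈ 𝓝 x)
    (hJc : J.OrdConnected) (hmono : StrictMonoOn φ J) (hf : ContinuousAt f x)
    (hfm : StronglyMeasurableAtFilter f (𝓝 x)) :
    Tendsto (fun δ => δ⁻¹ • ∫ t in J ∩ φ ⁻¹' Icc (φ x) (φ x + δ), f t) (𝓝[>] 0)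
      (𝓝 (d⁻¹ • f x)) := by
  obtain ⟨c, rfl, hc, hφc⟩ := hφ.exists_rightInverse_add hd
  have hcJ : ∀ᶠ δ in 𝓝 0, c δ ∈ J := hc.continuousAt hJ
  refine (tendsto_inv_smul_intervalIntegral_comp hc hf hfm).congr' ?_
  filter_upwards [nhdsWithin_le_nhds (hcJ.and hφc), self_mem_nhdsWithin]
    with δ ⟨hδJ, hδφ⟩ (hδ : 0 < δ)
  have hle : c 0 ≤ c δ := (hmono.le_iff_le (mem_of_mem_nhds hJ) hδJ).1 (by linarith)
  rw [← hδφ, hmono.inter_preimage_Icc hJc (mem_of_mem_nhds hJ) hδJ,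
    integral_Icc_eq_integral_Ioc, intervalIntegral.integral_of_le hle]

theorem tendsto_inv_smul_setIntegral_inter_preimage_Icc_of_strictAntiOn {φ : ℝ → ℝ} {d x : ℝ}
    {J : Set ℝ} {f : ℝ → E} (hφ : HasStrictDerivAt φ d x) (hd : d ≠ 0) (hJ : J ∈ 𝓝 x)
    (hJc : J.OrdConnected) (hanti : StrictAntiOn φ J) (hf : ContinuousAt f x)
    (hfm : StronglyMeasurableAtFilter f (𝓝 x)) :
    Tendsto (fun δ => δ⁻¹ • ∫ t in J ∩ φ ⁻¹' Icc (φ x) (φ x + δ), f t) (𝓝[>] 0)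
      (𝓝 (-(d⁻¹ • f x))) := by
  obtain ⟨c, rfl, hc, hφc⟩ := hφ.exists_rightInverse_add hd
  have hcJ : ∀ᶠ δ in 𝓝 0, c δ ∈ J := hc.continuousAt hJ
  refine (tendsto_inv_smul_intervalIntegral_comp hc hf hfm).neg.congr' ?_
  filter_upwards [nhdsWithin_le_nhds (hcJ.and hφc), self_mem_nhdsWithin]
    with δ ⟨hδJ, hδφ⟩ (hδ : 0 < δ)
  have hle : c δ ≤ c 0 := (hanti.le_iff_ge (mem_of_mem_nhds hJ) hδJ).1 (by linarith)
  rw [← hδφ, hanti.inter_preimage_Icc hJc hδJ (mem_of_mem_nhds hJ),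
    integral_Icc_eq_integral_Ioc, ← intervalIntegral.integral_of_le hle,
    intervalIntegral.integral_symm, smul_neg, neg_neg]

theorem HasStrictDerivAt.eventually_tendsto_inv_smul_setIntegral_ball_inter_preimage_Icc
    {φ : ℝ → ℝ} {d x : ℝ} {f : ℝ → E} (hφ : HasStrictDerivAt φ d x) (hd : d ≠ 0)
    (hf : ContinuousAt f x) (hfm : StronglyMeasurableAtFilter f (𝓝 x)) :
    ∀ᶠ r in 𝓝[>] 0, Tendsto (fun δ => δ⁻¹ • ∫ t in ball x r ∩ φ ⁻¹' Icc (φ x) (φ x + δ), f t)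
      (𝓝[>] 0) (𝓝 (|d|⁻¹ • f x)) := by
  have hball : ∀ r > 0, ball x r ∈ 𝓝 x ∧ (ball x r).OrdConnected := fun r hr =>
    ⟨ball_mem_nhds x hr, by rw [Real.ball_eq_Ioo]; exact ordConnected_Ioo⟩
  rcases hd.lt_or_gt with hneg | hpos
  · obtain ⟨U, hU, hanti⟩ := hφ.exists_mem_nhds_strictAntiOn hneg
    filter_upwards [nhdsWithin_le_nhds (eventually_ball_subset hU), self_mem_nhdsWithin]
      with r hrU (hr : 0 < r)
    rw [abs_of_neg hneg, inv_neg, neg_smul]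
    exact tendsto_inv_smul_setIntegral_inter_preimage_Icc_of_strictAntiOn hφ hd (hball r hr).1
      (hball r hr).2 (hanti.mono hrU) hf hfm
  · obtain ⟨U, hU, hmono⟩ := hφ.exists_mem_nhds_strictMonoOn hpos
    filter_upwards [nhdsWithin_le_nhds (eventually_ball_subset hU), self_mem_nhdsWithin]
      with r hrU (hr : 0 < r)
    rw [abs_of_pos hpos]
    exact tendsto_inv_smul_setIntegral_inter_preimage_Icc_of_strictMonoOn hφ hd (hball r hr).1
      (hball r hr).2 (hmono.mono hrU) hf hfm

theorem tendsto_inv_smul_setIntegral_inter_preimage_Icc {K : Set ℝ} {φ : ℝ → ℝ} {f : ℝ → E}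
    {a : ℝ} {ι : Type*} [Fintype ι] {b d : ι → ℝ} (hK : IsCompact K) (hφ : ContinuousOn φ K)
    (hf : ContinuousOn f K) (hb : Function.Injective b) (hbK : ∀ i, K ∈ 𝓝 (b i))
    (hlevel : K ∩ φ ⁻¹' {a} = range b) (hφd : ∀ i, HasStrictDerivAt φ (d i) (b i))
    (hd : ∀ i, d i ≠ 0) :
    Tendsto (fun δ => δ⁻¹ • ∫ t in K ∩ φ ⁻¹' Icc a (a + δ), f t) (𝓝[>] 0)
      (𝓝 (∑ i, |d i|⁻¹ • f (b i))) := by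
  have hφb (i : ι) : φ (b i) = a := (hlevel.symm ▸ mem_range_self i : b i ∈ K ∩ φ ⁻¹' {a}).2
  obtain ⟨r, hrK, hdisj, hlim, hr⟩ : ∃ r, (∀ i, ball (b i) r ⊆ K) ∧
      Pairwise (Function.onFun Disjoint fun i => ball (b i) r) ∧
      (∀ i, Tendsto (fun δ => δ⁻¹ • ∫ t in ball (b i) r ∩ φ ⁻¹' Icc a (a + δ), f t) (𝓝[>] 0)
        (𝓝 (|d i|⁻¹ • f (b i)))) ∧ 0 < r := by
    refine ((eventually_all.2 fun i => nhdsWithin_le_nhds (eventually_ball_subset (hbK i))).and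
      ((eventually_pairwise_disjoint_ball hb).and ((eventually_all.2 fun i => ?_).and
        self_mem_nhdsWithin))).exists
    simpa only [hφb] using (hφd i).eventually_tendsto_inv_smul_setIntegral_ball_inter_preimage_Icc
      (hd i) (hf.continuousAt (hbK i))
      ⟨K, hbK i, hf.aestronglyMeasurable hK.isClosed.measurableSet⟩
  have hnear := hK.eventually_inter_preimage_Icc_subset hφ (isOpen_iUnion fun i => isOpen_ball)
    (hlevel.trans_subset (range_subset_iff.2 fun i => mem_iUnion.2 ⟨i, mem_ball_self hr⟩))
  refine (tendsto_finsetSum _ fun i _ => hlim i).congr' ?_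
  filter_upwards [nhdsWithin_le_nhds hnear] with δ hδ
  rw [← Finset.smul_sum, setIntegral_eq_sum_setIntegral_inter hδ
    (hφ.preimage_isClosed_of_isClosed hK.isClosed isClosed_Icc).measurableSet
    (fun i => measurableSet_ball) hdisj ((hf.integrableOn_compact hK).mono_set inter_subset_left)]
  congr 2 with i
  rw [inter_right_comm, inter_eq_right.2 (hrK i), inter_comm]

end

theorem stmt_16 (θ φ : ℝ → ℝ)
    (hθ : ContinuousOn θ (Set.Icc 0 (2 * π)))
    (hφ : ContDiffOn ℝ 1 φ (Set.Icc 0 (2 * π)))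
    (a : ℝ) (ha0 : a ≠ φ 0) (ha2 : a ≠ φ (2 * π))
    (m : ℕ) (b : Fin m → ℝ) (hbinj : Function.Injective b)
    (hpre : {t ∈ Set.Icc 0 (2 * π) | φ t = a} = Set.range b)
    (hreg : ∀ j : Fin m, deriv φ (b j) ≠ 0)
    (hint : ∀ δ : ℝ, 0 ≤ δ →
      ∫ t in {t ∈ Set.Icc 0 (2 * π) | a ≤ φ t ∧ φ t ≤ a + δ},
        Complex.exp (Complex.I * (θ t : ℂ)) = 0) :
    ∑ j : Fin m, Complex.exp (Complex.I * (θ (b j) : ℂ)) / ((|deriv φ (b j)| : ℝ) : ℂ) = 0 := by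
  have hbI (j : Fin m) : b j ∈ Ioo 0 (2 * π) := by
    obtain ⟨⟨h0, h2π⟩, hφb⟩ : b j ∈ {t ∈ Icc 0 (2 * π) | φ t = a} := hpre ▸ mem_range_self j
    exact ⟨h0.lt_of_ne fun h => ha0 (by rw [h, hφb]), h2π.lt_of_ne fun h => ha2 (by rw [← h, hφb])⟩
  have hnhds (j : Fin m) : Icc 0 (2 * π) ∈ 𝓝 (b j) := Icc_mem_nhds (hbI j).1 (hbI j).2
  have hlim := tendsto_inv_smul_setIntegral_inter_preimage_Icc
    (f := fun t => Complex.exp (Complex.I * (θ t : ℂ))) isCompact_Icc hφ.continuousOn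
    (by fun_prop) hbinj hnhds hpre
    (fun j => (hφ.contDiffAt (hnhds j)).hasStrictDerivAt one_ne_zero) hreg
  have hzero : Tendsto (fun δ : ℝ => δ⁻¹ • ∫ t in {t ∈ Icc 0 (2 * π) | a ≤ φ t ∧ φ t ≤ a + δ},
      Complex.exp (Complex.I * (θ t : ℂ))) (𝓝[>] 0) (𝓝 0) := by
    refine tendsto_const_nhds.congr' ?_
    filter_upwards [self_mem_nhdsWithin] with δ (hδ : 0 < δ)
    rw [hint δ hδ.le, smul_zero]
  simpa [div_eq_inv_mul, Complex.real_smul] using tendsto_nhds_unique hlim hzero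
end
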